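/- arXiv:2601.00447 — 2 statements merged into one kernel-verified Lean document; each statement's English description precedes it below -/
import Mathlib

section
/- For every α ≥ 1 and β ≥ 1, there exist a finite set N of n agents, a nonempty finite set M of feasible centers, a pseudometric d^m on N, a pseudometric d^c on the disjoint union N ⊔ M, and an integer k ≥ 1, such that no clustering is simultaneously α-FJR with respect to the centroid loss ℓ^c_i(C,x) = d^c(i,x) and β-FJR with respect to the non-centroid loss ℓ^m_i(C,x) = max_{j∈C} d^m(i,j). -/
open Finset

/-- A pseudometric on a set `X`, valued in `ℝ≥0`. -/
def IsPseudometric {X : Type*} (d : X → X → NNReal) : Prop :=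
  (∀ x, d x x = 0) ∧ (∀ x y, d x y = d y x) ∧ (∀ x y z, d x y ≤ d x z + d z y)

/-- A clustering: `k` clusters `(part t, cent t)` whose member sets partition the agents. -/
structure Clustering (N M : Type*) (k : ℕ) where
  part : Fin k → Finset N
  cent : Fin k → M
  partition : ∀ i : N, ∃! t : Fin k, i ∈ part t

/-- The (unique) index of the cluster containing agent `i`. -/
noncomputable def Clustering.idx {N M : Type*} {k : ℕ} (X : Clustering N M k) (i : N) :
    Fin k :=
  (X.partition i).exists.choose

/-- The loss of agent `i` under clustering `X`, for loss functions `l`. -/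
noncomputable def Clustering.loss {N M : Type*} {k : ℕ} (X : Clustering N M k)
    (l : N → Finset N → M → ℝ) (i : N) : ℝ :=
  l i (X.part (X.idx i)) (X.cent (X.idx i))

/-- `X` is in the `α`-core: no group `S` with `|S| ≥ n/k` and center `y` such that
`α·ℓ_i(S,y) < ℓ_i(X)` for every `i ∈ S`. -/
def InCore {N M : Type*} [Fintype N] {k : ℕ} (X : Clustering N M k)
    (l : N → Finset N → M → ℝ) (α : ℝ) : Prop :=
  ¬ ∃ (S : Finset N) (y : M), (Fintype.card N : ℝ) / (k : ℝ) ≤ (S.card : ℝ) ∧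
      ∀ i ∈ S, α * l i S y < X.loss l i

/-- `X` is `α`-FJR: no group `S` with `|S| ≥ n/k` and center `y` such that
`α·ℓ_i(S,y) < min_{j∈S} ℓ_j(X)` for every `i ∈ S`. -/
def IsFJR {N M : Type*} [Fintype N] {k : ℕ} (X : Clustering N M k)
    (l : N → Finset N → M → ℝ) (α : ℝ) : Prop :=
  ¬ ∃ (S : Finset N) (y : M), (Fintype.card N : ℝ) / (k : ℝ) ≤ (S.card : ℝ) ∧
      ∀ i ∈ S, ∀ j ∈ S, α * l i S y < X.loss l j

lemma pseudo_of_classes {X : Type*} (f : X → ℕ) :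
    IsPseudometric (fun x y => if f x = f y then (0 : NNReal) else 1) := by
  refine ⟨fun x => by simp, fun x y => ?_, fun x y z => ?_⟩
  · by_cases h : f x = f y
    · simp [h]
    · have h2 : f y ≠ f x := fun h' => h h'.symm
      simp [h, h2]
  · by_cases h1 : f x = f z
    · by_cases h2 : f z = f y
      · simp [h1, h2, h1.trans h2]
      · simp [h1, h2]
    · by_cases hxy : f x = f y
      · simp [hxy]
      · by_cases h2 : f z = f y <;> simp [h1, h2, hxy] <;> exact le_add_self

lemma mem_part_iff {N M : Type*} {k : ℕ} (X : Clustering N M k) (i : N) (t : Fin k) :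
    i ∈ X.part t ↔ X.idx i = t := by
  obtain ⟨t0, ht0, huniq⟩ := X.partition i
  have hidx : X.idx i = t0 := huniq _ (X.partition i).exists.choose_spec
  constructor
  · intro h; rw [hidx, (huniq t h)]
  · rintro rfl; exact (X.partition i).exists.choose_spec

lemma mem_part_self {N M : Type*} {k : ℕ} (X : Clustering N M k) (i : N) :
    i ∈ X.part (X.idx i) := (X.partition i).exists.choose_spec

/-- For every `α, β ≥ 1`, there is an instance (with a non-centroid pseudometric on `N` and
a centroid pseudometric on `N ⊔ M`) in which no clustering is simultaneously `α`-FJR with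
respect to the centroid loss and `β`-FJR with respect to the non-centroid loss. -/
theorem no_simultaneous_FJR (α β : ℝ) (hα : 1 ≤ α) (hβ : 1 ≤ β) :
    ∃ (n m k : ℕ) (dm : Fin n → Fin n → NNReal)
      (dc : Fin n ⊕ Fin m → Fin n ⊕ Fin m → NNReal),
      1 ≤ n ∧ 1 ≤ m ∧ 1 ≤ k ∧ IsPseudometric dm ∧ IsPseudometric dc ∧
      ∀ X : Clustering (Fin n) (Fin m) k,
        ¬ (IsFJR X (fun i _C x => ((dc (Sum.inl i) (Sum.inr x) : NNReal) : ℝ)) α ∧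
           IsFJR X (fun i C _x => ((C.sup fun j => dm i j : NNReal) : ℝ)) β) := by
  refine ⟨8, 2, 4,
    (fun i j => if (fun v : Fin 8 => (v : ℕ) / 2) i = (fun v : Fin 8 => (v : ℕ) / 2) j
      then (0 : NNReal) else 1),
    (fun x y => if (Sum.elim (fun v : Fin 8 => (v : ℕ) % 2) (fun u : Fin 2 => (u : ℕ))) x
        = (Sum.elim (fun v : Fin 8 => (v : ℕ) % 2) (fun u : Fin 2 => (u : ℕ))) y
      then (0 : NNReal) else 1),
    by norm_num, by norm_num, by norm_num,
    pseudo_of_classes _, pseudo_of_classes _, ?_⟩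
  rintro X ⟨hc, hm⟩
  -- Step A : row witnesses
  have hwit : ∀ r : Fin 4, ∃ i : Fin 8, (i : ℕ) / 2 = (r : ℕ) ∧
      ∀ j ∈ X.part (X.idx i), (j : ℕ) / 2 = (r : ℕ) := by
    intro r
    by_contra hno
    push_neg at hno
    apply hm
    have hr4 : (r : ℕ) < 4 := r.isLt
    refine ⟨{⟨2 * r, by omega⟩, ⟨2 * r + 1, by omega⟩}, 0, ?_, ?_⟩
    · have hne : (⟨2 * r, by omega⟩ : Fin 8) ≠ ⟨2 * r + 1, by omega⟩ := by
        simp [Fin.ext_iff]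
      rw [Finset.card_insert_of_notMem (by simp [hne]), Finset.card_singleton]
      norm_num
    · intro i hi j hj
      have hrowi : (i : ℕ) / 2 = (r : ℕ) := by
        simp only [Finset.mem_insert, Finset.mem_singleton] at hi
        rcases hi with h | h <;> subst h <;> simp <;> omega
      have hrowj : (j : ℕ) / 2 = (r : ℕ) := by
        simp only [Finset.mem_insert, Finset.mem_singleton] at hj
        rcases hj with h | h <;> subst h <;> simp <;> omega
      have hsup : (({⟨2 * r, by omega⟩, ⟨2 * r + 1, by omega⟩} : Finset (Fin 8)).sup
          (fun j' => if (i : ℕ) / 2 = (j' : ℕ) / 2 then (0 : NNReal) else 1)) = 0 := by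
        refine le_antisymm (Finset.sup_le ?_) zero_le
        intro s hs
        have hrows : (s : ℕ) / 2 = (r : ℕ) := by
          simp only [Finset.mem_insert, Finset.mem_singleton] at hs
          rcases hs with h | h <;> subst h <;> simp <;> omega
        show (if (i : ℕ) / 2 = (s : ℕ) / 2 then (0 : NNReal) else 1) ≤ 0
        rw [if_pos (by omega)]
      obtain ⟨o, ho, hor⟩ := hno j hrowj
      have hsup2 : (1 : NNReal) ≤ (X.part (X.idx j)).sup
          (fun j' => if (j : ℕ) / 2 = (j' : ℕ) / 2 then (0 : NNReal) else 1) := by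
        have h0 := Finset.le_sup (s := X.part (X.idx j))
          (f := fun j' : Fin 8 => if (j : ℕ) / 2 = (j' : ℕ) / 2 then (0 : NNReal) else 1) ho
        refine le_trans (le_of_eq ?_) h0
        show (1 : NNReal) = if (j : ℕ) / 2 = (o : ℕ) / 2 then (0 : NNReal) else 1
        rw [if_neg (by omega)]
      have h1 := NNReal.coe_le_coe.mpr hsup2
      rw [NNReal.coe_one] at h1
      simp only [Clustering.loss, hsup]
      rw [NNReal.coe_zero, mul_zero]
      linarith [h1]
  choose w hw1 hw2 using hwit
  -- Step B : surjectivity of r ↦ idx (w r)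
  have hinj : Function.Injective (fun r => X.idx (w r)) := by
    intro r r' h
    have h1 : w r' ∈ X.part (X.idx (w r)) := by
      have := mem_part_self X (w r')
      simpa [← h] using this
    have h2 := hw2 r (w r') h1
    have h3 := hw1 r'
    exact Fin.ext (by omega)
  have hsurj : Function.Surjective (fun r => X.idx (w r)) :=
    Finite.injective_iff_surjective.mp hinj
  -- Step C : every agent's cluster index is that of its row's witness
  have hidx : ∀ a : Fin 8, X.idx a = X.idx (w ⟨(a : ℕ) / 2, by omega⟩) := by
    intro a
    obtain ⟨r, hr⟩ := hsurj (X.idx a)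
    have ha : a ∈ X.part (X.idx (w r)) := by
      have := mem_part_self X a
      simpa [← hr] using this
    have h2 := hw2 r a ha
    have : (⟨(a : ℕ) / 2, by omega⟩ : Fin 4) = r := Fin.ext (by simpa using h2)
    rw [this]; exact hr.symm
  -- Step D : pigeonhole on row centers
  set e : Fin 4 → Fin 2 := fun r => X.cent (X.idx (w r)) with he
  have hpig : ∃ r r' : Fin 4, r ≠ r' ∧ e r = e r' := by
    by_contra hno
    push_neg at hno
    have hinj2 : Function.Injective e := by
      intro r r' h
      by_contra hne
      exact hno r r' hne h
    have := Fintype.card_le_of_injective e hinj2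
    simp at this
  obtain ⟨r, r', hne, heq⟩ := hpig
  -- Step E : centroid deviation
  set c : Fin 2 := e r with hc0
  have hcval : (c : ℕ) < 2 := c.isLt
  set c' : Fin 2 := ⟨1 - (c : ℕ), by omega⟩ with hc'
  have hr4 : (r : ℕ) < 4 := r.isLt
  have hr'4 : (r' : ℕ) < 4 := r'.isLt
  have hrr' : (r : ℕ) ≠ (r' : ℕ) := fun h => hne (Fin.ext h)
  set a : Fin 8 := ⟨2 * r + (c' : ℕ), by omega⟩ with ha
  set b : Fin 8 := ⟨2 * r' + (c' : ℕ), by omega⟩ with hb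
  -- centers of a and b equal c
  have hcent : ∀ (v : Fin 8) (rv : Fin 4), (v : ℕ) / 2 = (rv : ℕ) →
      X.cent (X.idx v) = e rv := by
    intro v rv hv
    rw [hidx v]
    congr 2
    exact congrArg w (Fin.ext (by simpa using hv))
  have hca : X.cent (X.idx a) = c := by
    rw [hcent a r (by simp [ha]; omega)]
  have hcb : X.cent (X.idx b) = c := by
    rw [hcent b r' (by simp [hb]; omega), ← heq]
  apply hc
  refine ⟨{a, b}, c', ?_, ?_⟩
  · have hne2 : a ≠ b := by
      simp [ha, hb, Fin.ext_iff]
      omega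
    rw [Finset.card_insert_of_notMem (by simp [hne2]), Finset.card_singleton]
    norm_num
  · intro i hi j hj
    have hcolsi : (i : ℕ) % 2 = (c' : ℕ) := by
      simp only [Finset.mem_insert, Finset.mem_singleton] at hi
      rcases hi with h | h <;> subst h <;> simp [ha, hb] <;> omega
    have hcj : X.cent (X.idx j) = c := by
      simp only [Finset.mem_insert, Finset.mem_singleton] at hj
      rcases hj with h | h <;> subst h
      · exact hca
      · exact hcb
    have hcolsj : (j : ℕ) % 2 = (c' : ℕ) := by
      simp only [Finset.mem_insert, Finset.mem_singleton] at hj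
      rcases hj with h | h <;> subst h <;> simp [ha, hb] <;> omega
    have hdiff : (c' : ℕ) ≠ (c : ℕ) := by simp [hc']; omega
    simp only [Clustering.loss, Sum.elim_inl, Sum.elim_inr, hcj]
    have hnej : ¬ ((j : ℕ) % 2 = (c : ℕ)) := by omega
    simp only [hcolsi, hnej, eq_self_iff_true, if_true, if_false, NNReal.coe_zero, mul_zero, NNReal.coe_one]
    linarith
end

section
/- For every α ≥ 1, there exists a semi-centroid clustering instance equipped with the dual metric loss — determined by a pseudometric d^m on N and a pseudometric d^c on the disjoint union N ⊔ M — in which k divides n and no balanced clustering (one in which every cluster has exactly n/k members) is in the α-core. -/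
open Finset

/-- The dual metric loss: `ℓ_i(C,x) = max_{j∈C} d^m(i,j) + d^c(i,x)`. -/
noncomputable def dualLoss {N M : Type*} (dm : N → N → NNReal)
    (dc : N ⊕ M → N ⊕ M → NNReal) (i : N) (C : Finset N) (x : M) : ℝ :=
  ((C.sup fun j => dm i j : NNReal) : ℝ) + ((dc (Sum.inl i) (Sum.inr x) : NNReal) : ℝ)


/-!
Take four agents: three of them coincide in `d^m`, the fourth lies at distance `D > α` from
them. Each of the three near agents has a center of its own at `d^c`-distance `0`; every other
agent–center distance is `1`. In a balanced clustering into two pairs, the far agent's partner `i`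
pays at least `D`, and the other pair contains a near agent `p` not sitting on its center. Then
`{i, p}` blocks with center `p`: it costs `i` only `1` and `p` nothing.
-/

def labelDist {X Y : Type*} [DecidableEq Y] (f : X → Y) (c : NNReal) (x y : X) : NNReal :=
  if f x = f y then 0 else c

lemma isPseudometric_labelDist {X Y : Type*} [DecidableEq Y] (f : X → Y) (c : NNReal) :
    IsPseudometric (labelDist f c) := by
  refine ⟨fun x => if_pos rfl, fun x y => ?_, fun x y z => ?_⟩
  · simp only [labelDist, eq_comm]
  · unfold labelDist
    split_ifs <;> simp_all

namespace Clustering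

variable {N M : Type*} {k : ℕ} (X : Clustering N M k)

lemma mem_part_idx (i : N) : i ∈ X.part (X.idx i) :=
  (X.partition i).exists.choose_spec

lemma idx_eq_of_mem {i : N} {t : Fin k} (h : i ∈ X.part t) : X.idx i = t :=
  (X.partition i).unique (X.mem_part_idx i) h

lemma ne_of_mem_part_of_ne {i j : N} {s t : Fin k} (hi : i ∈ X.part s) (hj : j ∈ X.part t)
    (hst : s ≠ t) : i ≠ j := by
  rintro rfl
  exact hst ((X.partition i).unique hi hj)

end Clustering

section DualLoss

variable {N M : Type*} (dm : N → N → NNReal) (dc : N ⊕ M → N ⊕ M → NNReal)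

lemma dm_le_dualLoss {i j : N} {C : Finset N} (hj : j ∈ C) (x : M) :
    (dm i j : ℝ) ≤ dualLoss dm dc i C x := by
  have := NNReal.coe_le_coe.mpr (le_sup (f := fun j => dm i j) hj)
  unfold dualLoss
  linarith [(dc (Sum.inl i) (Sum.inr x)).coe_nonneg]

lemma dc_le_dualLoss (i : N) (C : Finset N) (x : M) :
    (dc (Sum.inl i) (Sum.inr x) : ℝ) ≤ dualLoss dm dc i C x :=
  le_add_of_nonneg_left (NNReal.coe_nonneg _)

lemma dualLoss_eq_dc {i : N} {C : Finset N} (h : ∀ j ∈ C, dm i j = 0) (x : M) :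
    dualLoss dm dc i C x = dc (Sum.inl i) (Sum.inr x) := by
  rw [dualLoss, (Finset.sup_eq_bot_iff _ C).mpr h]
  simp

end DualLoss

section FarAgentInstance

variable {m k : ℕ}

def farAgentDist (D : NNReal) : Fin (m + 1) → Fin (m + 1) → NNReal :=
  labelDist (fun i => decide (i = Fin.last m)) D

def siteDist : Fin (m + 1) ⊕ Fin m → Fin (m + 1) ⊕ Fin m → NNReal :=
  labelDist (Sum.elim id Fin.castSucc) 1

lemma exists_blocking_pair (X : Clustering (Fin (m + 1)) (Fin m) k) (hk : 2 ≤ k)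
    (hsize : ∀ t, 1 < (X.part t).card) :
    ∃ i p : Fin (m + 1), i ≠ p ∧ i ≠ Fin.last m ∧ p ≠ Fin.last m ∧
      Fin.last m ∈ X.part (X.idx i) ∧ p ≠ (X.cent (X.idx p)).castSucc := by
  have : Nontrivial (Fin k) := Fin.nontrivial_iff_two_le.mpr hk
  set t := X.idx (Fin.last m)
  obtain ⟨s, hst⟩ := exists_ne t
  obtain ⟨i, hi, hi_last⟩ := exists_mem_ne (hsize t) (Fin.last m)
  obtain ⟨p, hp, hp_cent⟩ := exists_mem_ne (hsize s) (X.cent s).castSucc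
  refine ⟨i, p, X.ne_of_mem_part_of_ne hi hp hst.symm, hi_last,
    X.ne_of_mem_part_of_ne hp (X.mem_part_idx _) hst, ?_, ?_⟩
  · rw [X.idx_eq_of_mem hi]
    exact X.mem_part_idx _
  · rwa [X.idx_eq_of_mem hp]

lemma not_inCore_of_blocking_pair (X : Clustering (Fin (m + 1)) (Fin m) k) {α : ℝ}
    {D : NNReal} (hαD : α < D) (hsize : ((m + 1 : ℕ) : ℝ) / k ≤ 2) {i p : Fin (m + 1)}
    (hip : i ≠ p) (hi : i ≠ Fin.last m) (hp : p ≠ Fin.last m)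
    (hi_far : Fin.last m ∈ X.part (X.idx i)) (hp_cent : p ≠ (X.cent (X.idx p)).castSucc) :
    ¬ InCore X (dualLoss (farAgentDist D) siteDist) α := by
  have near : ∀ j ∈ ({i, p} : Finset (Fin (m + 1))), ∀ j' ∈ ({i, p} : Finset (Fin (m + 1))),
      farAgentDist D j j' = 0 := by
    simp_all [farAgentDist, labelDist]
  have loss_i : dualLoss (farAgentDist D) siteDist i {i, p} (p.castPred hp) = 1 := by
    rw [dualLoss_eq_dc _ _ (near i (by simp))]
    simp [siteDist, labelDist, hip]
  have loss_p : dualLoss (farAgentDist D) siteDist p {i, p} (p.castPred hp) = 0 := by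
    rw [dualLoss_eq_dc _ _ (near p (by simp))]
    simp [siteDist, labelDist]
  refine not_not_intro ⟨{i, p}, p.castPred hp, ?_, ?_⟩
  · simpa [card_pair hip] using hsize
  simp only [mem_insert, mem_singleton, forall_eq_or_imp, forall_eq, loss_i, loss_p]
  constructor
  · calc α * 1 < D := by rwa [mul_one]
      _ = farAgentDist D i (Fin.last m) := by simp [farAgentDist, labelDist, hi]
      _ ≤ X.loss _ i := dm_le_dualLoss _ _ hi_far _
  · calc α * 0 < 1 := by simp
      _ = siteDist (Sum.inl p) (Sum.inr (X.cent (X.idx p))) := by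
          simp [siteDist, labelDist, hp_cent]
      _ ≤ X.loss _ p := dc_le_dualLoss _ _ _ _ _

end FarAgentInstance

theorem balanced_core_impossible_dual_general (α : ℝ) :
    ∃ (n m k : ℕ) (dm : Fin n → Fin n → NNReal)
      (dc : Fin n ⊕ Fin m → Fin n ⊕ Fin m → NNReal),
      1 ≤ n ∧ 1 ≤ m ∧ 1 ≤ k ∧ k ∣ n ∧ IsPseudometric dm ∧ IsPseudometric dc ∧
      ∀ X : Clustering (Fin n) (Fin m) k,
        (∀ t : Fin k, (X.part t).card = n / k) → ¬ InCore X (dualLoss dm dc) α := by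
  refine ⟨4, 3, 2, farAgentDist (α.toNNReal + 1), siteDist, by norm_num, by norm_num,
    by norm_num, ⟨2, rfl⟩, isPseudometric_labelDist _ _, isPseudometric_labelDist _ _,
    fun X hbal => ?_⟩
  obtain ⟨i, p, hip, hi, hp, hi_far, hp_cent⟩ :=
    exists_blocking_pair X le_rfl fun t => by rw [hbal t]; norm_num
  have hαD : α < ((α.toNNReal + 1 : NNReal) : ℝ) := by
    push_cast
    linarith [α.le_coe_toNNReal]
  exact not_inCore_of_blocking_pair X hαD (by norm_num) hip hi hp hi_far hp_cent

/-- Balanced-clustering impossibility for the dual metric loss: for every `α ≥ 1`, there is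
an instance in which `k` divides `n` and no balanced clustering (every cluster of size
exactly `n/k`) is in the `α`-core. -/
theorem balanced_core_impossible_dual (α : ℝ) (hα : 1 ≤ α) :
    ∃ (n m k : ℕ) (dm : Fin n → Fin n → NNReal)
      (dc : Fin n ⊕ Fin m → Fin n ⊕ Fin m → NNReal),
      1 ≤ n ∧ 1 ≤ m ∧ 1 ≤ k ∧ k ∣ n ∧ IsPseudometric dm ∧ IsPseudometric dc ∧
      ∀ X : Clustering (Fin n) (Fin m) k,
        (∀ t : Fin k, (X.part t).card = n / k) → ¬ InCore X (dualLoss dm dc) α :=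
  balanced_core_impossible_dual_general α
end
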